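/- arXiv:2009.14267 — 5 statements merged into one kernel-verified Lean document; each statement's English description precedes it below -/
import Mathlib

section
/- Let ζ = (ζ_k)_{k≥1} be a square-summable sequence of complex numbers, i.e. Σ_{k≥1} |ζ_k|² < ∞. Then the sequences of polynomials (c_N)_{N≥0} and (d_N)_{N≥0} converge, uniformly on every compact subset of the open unit disc 𝔻 = {z ∈ ℂ : |z| < 1}, to holomorphic functions c, d : 𝔻 → ℂ. -/
/-!
On the unit circle the recursion is unitary. Write `p^*(z) = z^N conj(p(1/z̄))` for the reflection
of a polynomial of degree at most `N` and `a = (1 + |ζ_{N+1}|²)^{-1/2}`. Then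
`c_{N+1} = a (c_N - conj(ζ_{N+1}) z d_N^*)` and `d_{N+1} = a (d_N + conj(ζ_{N+1}) z c_N^*)`, and
`|p^*| = |p|` on `|z| = 1`, so `|c_N|² + |d_N|² = 1` there. By the maximum modulus principle
`|c_N|, |d_N| ≤ 1` on the closed disc.

The reflections satisfy `c_{N+1}^* = a (z c_N^* - ζ_{N+1} d_N)` and
`d_{N+1}^* = a (z d_N^* + ζ_{N+1} c_N)`, so on `|z| ≤ r < 1` both are bounded by `m_N`, where
`m_0 = 1` and `m_{N+1} = r m_N + |ζ_{N+1}|`, a square summable sequence. Hence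
`|c_{N+1} - c_N|` and `|d_{N+1} - d_N|` are at most `|ζ_{N+1}|² + |ζ_{N+1}| m_N`, which is summable,
and the Weierstrass M-test gives locally uniform convergence on the disc. The limits are
holomorphic as locally uniform limits of polynomials.
-/

open Polynomial

/-- The pair of polynomials `(c_N, d_N)` arising as the bottom-row entries of the partial
products in root subgroup factorization:  `c_0 = 0`, `d_0 = 1`, and for `N ≥ 1`,
`c_N = (1+|ζ_N|²)^{-1/2} (c_{N-1} − conj(ζ_N) ∑_k conj((d_{N-1})_k) z^{N-k})`,
`d_N = (1+|ζ_N|²)^{-1/2} (d_{N-1} + conj(ζ_N) ∑_k conj((c_{N-1})_k) z^{N-k})`.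
Here `ζ k` for `k ≥ 1` are the root subgroup parameters (the value `ζ 0` is unused). -/
noncomputable def cdPair (ζ : ℕ → ℂ) : ℕ → Polynomial ℂ × Polynomial ℂ
  | 0 => (0, 1)
  | (N + 1) =>
    let c := (cdPair ζ N).1
    let d := (cdPair ζ N).2
    let a : ℂ := ((Real.sqrt (1 + ‖ζ (N + 1)‖ ^ 2))⁻¹ : ℝ)
    (Polynomial.C a * (c - Polynomial.C (starRingEnd ℂ (ζ (N + 1))) *
        ∑ k ∈ Finset.range (N + 1),
          Polynomial.C (starRingEnd ℂ (d.coeff k)) * Polynomial.X ^ (N + 1 - k)),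
     Polynomial.C a * (d + Polynomial.C (starRingEnd ℂ (ζ (N + 1))) *
        ∑ k ∈ Finset.range (N + 1),
          Polynomial.C (starRingEnd ℂ (c.coeff k)) * Polynomial.X ^ (N + 1 - k)))

open Finset Filter Metric Topology ComplexConjugate

/-- For `p.natDegree ≤ N` this is the polynomial `z ↦ z ^ N * conj (p.eval (conj z)⁻¹)`. -/
noncomputable def conjReflect (N : ℕ) (p : ℂ[X]) : ℂ[X] := (p.map (starRingEnd ℂ)).reflect N

lemma natDegree_conjReflect_le {N : ℕ} {p : ℂ[X]} (hp : p.natDegree ≤ N) :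
    (conjReflect N p).natDegree ≤ N :=
  natDegree_reflect_le.trans (max_le le_rfl (natDegree_map_le.trans hp))

lemma conjReflect_add (N : ℕ) (p q : ℂ[X]) :
    conjReflect N (p + q) = conjReflect N p + conjReflect N q := by
  simp [conjReflect, Polynomial.map_add]

lemma conjReflect_C_mul (N : ℕ) (w : ℂ) (p : ℂ[X]) :
    conjReflect N (C w * p) = C (conj w) * conjReflect N p := by
  simp [conjReflect, Polynomial.map_mul]

lemma reflect_eq_sum_range {R : Type*} [Semiring R] {N : ℕ} {p : R[X]} (hp : p.natDegree ≤ N) :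
    p.reflect N = ∑ k ∈ range (N + 1), C (p.coeff k) * X ^ (N - k) := by
  ext n
  rw [coeff_reflect, finsetSum_coeff]
  simp only [coeff_C_mul_X_pow]
  rcases le_or_gt n N with hn | hn
  · rw [revAt_le hn, Finset.sum_eq_single (N - n)] <;> grind
  · rw [revAt_eq_self_of_lt hn, coeff_eq_zero_of_natDegree_lt (hp.trans_lt hn)]
    exact (Finset.sum_eq_zero fun k hk => by grind).symm

lemma X_mul_conjReflect {N : ℕ} {p : ℂ[X]} (hp : p.natDegree ≤ N) :
    X * conjReflect N p = ∑ k ∈ range (N + 1), C (conj (p.coeff k)) * X ^ (N + 1 - k) := by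
  rw [conjReflect, reflect_eq_sum_range (natDegree_map_le.trans hp), mul_sum]
  refine sum_congr rfl fun k hk => ?_
  rw [coeff_map, Nat.sub_add_comm (Nat.lt_succ_iff.mp (mem_range.mp hk)), pow_succ]
  ring

lemma conjReflect_succ {N : ℕ} {p : ℂ[X]} (hp : p.natDegree ≤ N) :
    conjReflect (N + 1) p = X * conjReflect N p := by
  have := reflect_mul (p.map (starRingEnd ℂ)) 1 (natDegree_map_le.trans hp)
    (natDegree_one.trans_le zero_le_one)
  rw [mul_one, reflect_one, pow_one] at this
  rw [conjReflect, this, mul_comm, conjReflect]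

lemma conjReflect_succ_X_mul {N : ℕ} {p : ℂ[X]} (hp : p.natDegree ≤ N) :
    conjReflect (N + 1) (X * conjReflect N p) = p := by
  rw [conjReflect, add_comm, Polynomial.map_mul, map_X, reflect_mul _ _ natDegree_X_le
    (natDegree_map_le.trans (natDegree_conjReflect_le hp)), reflect_one_X, one_mul, conjReflect,
    ← reflect_map, reflect_reflect, Polynomial.map_map]
  simp

lemma conjReflect_step {N : ℕ} {p q : ℂ[X]} (hp : p.natDegree ≤ N) (hq : q.natDegree ≤ N)
    (a : ℝ) (w : ℂ) :
    conjReflect (N + 1) (C (a : ℂ) * (p + C w * (X * conjReflect N q))) =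
      C (a : ℂ) * (X * conjReflect N p + C (conj w) * q) := by
  rw [conjReflect_C_mul, conjReflect_add, conjReflect_C_mul, conjReflect_succ hp,
    conjReflect_succ_X_mul hq, Complex.conj_ofReal]

lemma eval_conjReflect {N : ℕ} {p : ℂ[X]} (hp : p.natDegree ≤ N) {z : ℂ} (hz : ‖z‖ = 1) :
    (conjReflect N p).eval z = z ^ N * conj (p.eval z) := by
  have hz0 : conj z ≠ 0 := by simp [← norm_ne_zero_iff, hz]
  let _ := invertibleOfNonzero hz0
  have hinv : ⅟(conj z) = z := by
    rw [invOf_eq_inv, Complex.inv_def, Complex.normSq_eq_norm_sq, Complex.norm_conj, hz]; simp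
  have := eval₂_reflect_mul_pow (starRingEnd ℂ) (conj z) N p hp
  rw [hinv, eval₂_at_apply] at this
  rw [conjReflect, reflect_map, eval_map, ← this, mul_left_comm, ← mul_pow]
  simp [Complex.mul_conj, Complex.normSq_eq_norm_sq, hz]

noncomputable def invSqrtOneAddNormSq (w : ℂ) : ℝ := (√(1 + ‖w‖ ^ 2))⁻¹

section invSqrtOneAddNormSq

variable (w : ℂ)

lemma invSqrtOneAddNormSq_nonneg : 0 ≤ invSqrtOneAddNormSq w :=
  inv_nonneg.mpr (Real.sqrt_nonneg _)

lemma invSqrtOneAddNormSq_le_one : invSqrtOneAddNormSq w ≤ 1 :=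
  inv_le_one_of_one_le₀ (Real.one_le_sqrt.mpr (by nlinarith [sq_nonneg ‖w‖]))

lemma sq_invSqrtOneAddNormSq_mul : invSqrtOneAddNormSq w ^ 2 * (1 + ‖w‖ ^ 2) = 1 := by
  rw [invSqrtOneAddNormSq, inv_pow, Real.sq_sqrt (by positivity), inv_mul_cancel₀ (by positivity)]

lemma one_sub_invSqrtOneAddNormSq_le : 1 - invSqrtOneAddNormSq w ≤ ‖w‖ ^ 2 := by
  have h0 := invSqrtOneAddNormSq_nonneg w
  have h1 := invSqrtOneAddNormSq_le_one w
  have h2 : invSqrtOneAddNormSq w ^ 2 ≤ 1 := pow_le_one₀ h0 h1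
  nlinarith [sq_invSqrtOneAddNormSq_mul w, mul_le_mul_of_nonneg_right h2 (sq_nonneg ‖w‖)]

end invSqrtOneAddNormSq

lemma norm_sq_add_norm_sq_mul_sub_mul_conj (a : ℝ) (w x y : ℂ) :
    ‖(a : ℂ) * (x - w * conj y)‖ ^ 2 + ‖(a : ℂ) * (y + w * conj x)‖ ^ 2 =
      a ^ 2 * (1 + ‖w‖ ^ 2) * (‖x‖ ^ 2 + ‖y‖ ^ 2) := by
  simp only [Complex.sq_norm, Complex.normSq_apply, Complex.mul_re, Complex.mul_im,
    Complex.sub_re, Complex.sub_im, Complex.add_re, Complex.add_im, Complex.conj_re,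
    Complex.conj_im, Complex.ofReal_re, Complex.ofReal_im]
  ring

lemma Polynomial.norm_eval_le_of_forall_norm_eq_one {p : ℂ[X]} {M : ℝ}
    (h : ∀ z : ℂ, ‖z‖ = 1 → ‖p.eval z‖ ≤ M) {z : ℂ} (hz : ‖z‖ ≤ 1) : ‖p.eval z‖ ≤ M :=
  Complex.norm_le_of_forall_mem_frontier_norm_le (isBounded_ball (x := 0) (r := 1))
    p.differentiable.diffContOnCl (by simpa [frontier_ball] using h)
    (by simpa [closure_ball] using hz)

lemma norm_ofReal_mul_le_of_mem_Icc {a : ℝ} (ha : a ∈ Set.Icc (0 : ℝ) 1) (x : ℂ) :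
    ‖(a : ℂ) * x‖ ≤ ‖x‖ := by
  rw [norm_mul, Complex.norm_real, Real.norm_of_nonneg ha.1]
  exact mul_le_of_le_one_left (norm_nonneg x) ha.2

lemma norm_invSqrtOneAddNormSq_mul_add_sub_le (w : ℂ) {x : ℂ} (hx : ‖x‖ ≤ 1) (y : ℂ) :
    ‖(invSqrtOneAddNormSq w : ℂ) * (x + y) - x‖ ≤ ‖w‖ ^ 2 + ‖y‖ := by
  have ha := invSqrtOneAddNormSq_le_one w
  calc ‖(invSqrtOneAddNormSq w : ℂ) * (x + y) - x‖
      = ‖((invSqrtOneAddNormSq w - 1 : ℝ) : ℂ) * x + (invSqrtOneAddNormSq w : ℂ) * y‖ := by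
        push_cast; ring_nf
    _ ≤ (1 - invSqrtOneAddNormSq w) * 1 + ‖y‖ := by
        refine (norm_add_le _ _).trans (add_le_add ?_ (norm_ofReal_mul_le_of_mem_Icc
          ⟨invSqrtOneAddNormSq_nonneg w, ha⟩ y))
        rw [norm_mul, Complex.norm_real, Real.norm_of_nonpos (by linarith)]
        exact mul_le_mul (by linarith) hx (norm_nonneg x) (by linarith)
    _ ≤ ‖w‖ ^ 2 + ‖y‖ := by linarith [one_sub_invSqrtOneAddNormSq_le w]

lemma norm_invSqrtOneAddNormSq_mul_mul_add_le (w : ℂ) {r m : ℝ} {z g x : ℂ} (hz : ‖z‖ ≤ r)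
    (hg : ‖g‖ ≤ m) (hx : ‖x‖ ≤ 1) :
    ‖(invSqrtOneAddNormSq w : ℂ) * (z * g + w * x)‖ ≤ r * m + ‖w‖ := by
  refine (norm_ofReal_mul_le_of_mem_Icc ⟨invSqrtOneAddNormSq_nonneg w,
    invSqrtOneAddNormSq_le_one w⟩ _).trans ((norm_add_le _ _).trans ?_)
  rw [norm_mul, norm_mul]
  exact add_le_add (mul_le_mul hz hg (norm_nonneg g) ((norm_nonneg z).trans hz))
    (mul_le_of_le_one_right (norm_nonneg w) hx)

lemma summable_of_le_mul_add {u w : ℕ → ℝ} {r : ℝ} (hu : ∀ n, 0 ≤ u n) (hr1 : r < 1)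
    (hw0 : ∀ n, 0 ≤ w n) (hw : Summable w) (h : ∀ n, u (n + 1) ≤ r * u n + w n) :
    Summable u := by
  refine summable_of_sum_range_le hu (c := (u 0 + ∑' n, w n) / (1 - r)) fun n => ?_
  rw [le_div_iff₀ (sub_pos.mpr hr1)]
  have hmono : ∑ k ∈ range n, u k ≤ ∑ k ∈ range (n + 1), u k :=
    sum_le_sum_of_subset_of_nonneg (range_subset_range.2 n.le_succ) fun k _ _ => hu k
  have hstep : ∑ k ∈ range n, u (k + 1) ≤ r * ∑ k ∈ range n, u k + ∑ k ∈ range n, w k := by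
    rw [mul_sum, ← sum_add_distrib]
    exact sum_le_sum fun k _ => h k
  have hw_le : ∑ k ∈ range n, w k ≤ ∑' k, w k := hw.sum_le_tsum _ fun k _ => hw0 k
  rw [sum_range_succ'] at hmono
  nlinarith

lemma tendstoUniformlyOn_of_norm_succ_sub_le {α F : Type*} [NormedAddCommGroup F]
    [CompleteSpace F] {f : ℕ → α → F} {u : ℕ → ℝ} (hu : Summable u) {s : Set α}
    (h : ∀ n, ∀ x ∈ s, ‖f (n + 1) x - f n x‖ ≤ u n) :
    TendstoUniformlyOn f (fun x => f 0 x + ∑' n, (f (n + 1) x - f n x)) atTop s := by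
  have := tendstoUniformlyOn_tsum_nat hu h
  rw [Metric.tendstoUniformlyOn_iff] at this ⊢
  intro ε hε
  filter_upwards [this ε hε] with N hN x hx
  rw [← add_sub_cancel (f 0 x) (f N x), ← sum_range_sub (fun n => f n x) N, dist_add_left]
  exact hN x hx

lemma tendstoLocallyUniformlyOn_of_forall_nhds_norm_succ_sub_le {α F : Type*} [TopologicalSpace α]
    [NormedAddCommGroup F] [CompleteSpace F] {f : ℕ → α → F} {s : Set α}
    (h : ∀ x ∈ s, ∃ t ∈ 𝓝 x, ∃ u : ℕ → ℝ, Summable u ∧ ∀ n, ∀ y ∈ t, ‖f (n + 1) y - f n y‖ ≤ u n) :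
    TendstoLocallyUniformlyOn f (fun x => f 0 x + ∑' n, (f (n + 1) x - f n x)) atTop s :=
  tendstoLocallyUniformlyOn_of_forall_exists_nhds fun x hx => by
    obtain ⟨t, ht, u, hu, hf⟩ := h x hx
    exact ⟨t, mem_nhdsWithin_of_mem_nhds ht, tendstoUniformlyOn_of_norm_succ_sub_le hu hf⟩

noncomputable def reflectMajorant (ζ : ℕ → ℂ) (r : ℝ) : ℕ → ℝ
  | 0 => 1
  | N + 1 => r * reflectMajorant ζ r N + ‖ζ (N + 1)‖

section cdPair

variable (ζ : ℕ → ℂ)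

lemma cdPair_succ_of_natDegree_le {N : ℕ} (hc : (cdPair ζ N).1.natDegree ≤ N)
    (hd : (cdPair ζ N).2.natDegree ≤ N) :
    cdPair ζ (N + 1) =
      (C (invSqrtOneAddNormSq (ζ (N + 1)) : ℂ) *
          ((cdPair ζ N).1 - C (conj (ζ (N + 1))) * (X * conjReflect N (cdPair ζ N).2)),
        C (invSqrtOneAddNormSq (ζ (N + 1)) : ℂ) *
          ((cdPair ζ N).2 + C (conj (ζ (N + 1))) * (X * conjReflect N (cdPair ζ N).1))) := by
  rw [X_mul_conjReflect hc, X_mul_conjReflect hd]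
  rfl

lemma natDegree_cdPair_le (N : ℕ) :
    (cdPair ζ N).1.natDegree ≤ N ∧ (cdPair ζ N).2.natDegree ≤ N := by
  induction N with
  | zero => simp [cdPair]
  | succ N ih =>
    have hX : ∀ p : ℂ[X], p.natDegree ≤ N →
        (C (conj (ζ (N + 1))) * (X * conjReflect N p)).natDegree ≤ N + 1 :=
      fun p hp => (natDegree_C_mul_le _ _).trans <| natDegree_mul_le.trans <|
        add_comm N 1 ▸ add_le_add natDegree_X_le (natDegree_conjReflect_le hp)
    rw [cdPair_succ_of_natDegree_le ζ ih.1 ih.2]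
    refine ⟨(natDegree_C_mul_le _ _).trans ?_, (natDegree_C_mul_le _ _).trans ?_⟩
    · simpa using natDegree_sub_le_of_le (ih.1.trans N.le_succ) (hX _ ih.2)
    · exact natDegree_add_le_of_degree_le (ih.2.trans N.le_succ) (hX _ ih.1)

lemma cdPair_succ (N : ℕ) :
    cdPair ζ (N + 1) =
      (C (invSqrtOneAddNormSq (ζ (N + 1)) : ℂ) *
          ((cdPair ζ N).1 - C (conj (ζ (N + 1))) * (X * conjReflect N (cdPair ζ N).2)),
        C (invSqrtOneAddNormSq (ζ (N + 1)) : ℂ) *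
          ((cdPair ζ N).2 + C (conj (ζ (N + 1))) * (X * conjReflect N (cdPair ζ N).1))) :=
  cdPair_succ_of_natDegree_le ζ (natDegree_cdPair_le ζ N).1 (natDegree_cdPair_le ζ N).2

lemma conjReflect_cdPair_succ (N : ℕ) :
    conjReflect (N + 1) (cdPair ζ (N + 1)).1 = C (invSqrtOneAddNormSq (ζ (N + 1)) : ℂ) *
        (X * conjReflect N (cdPair ζ N).1 - C (ζ (N + 1)) * (cdPair ζ N).2) ∧
      conjReflect (N + 1) (cdPair ζ (N + 1)).2 = C (invSqrtOneAddNormSq (ζ (N + 1)) : ℂ) *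
        (X * conjReflect N (cdPair ζ N).2 + C (ζ (N + 1)) * (cdPair ζ N).1) := by
  obtain ⟨hc, hd⟩ := natDegree_cdPair_le ζ N
  rw [cdPair_succ, sub_eq_add_neg, ← neg_mul, ← C_neg, conjReflect_step hc hd,
    conjReflect_step hd hc]
  simp [sub_eq_add_neg]

lemma norm_sq_add_norm_sq_eval_cdPair {z : ℂ} (hz : ‖z‖ = 1) (N : ℕ) :
    ‖(cdPair ζ N).1.eval z‖ ^ 2 + ‖(cdPair ζ N).2.eval z‖ ^ 2 = 1 := by
  induction N with
  | zero => simp [cdPair]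
  | succ N ih =>
    obtain ⟨hc, hd⟩ := natDegree_cdPair_le ζ N
    have hw : ‖conj (ζ (N + 1)) * z ^ (N + 1)‖ = ‖ζ (N + 1)‖ := by simp [hz]
    have hrot : ∀ u, conj (ζ (N + 1)) * (z * (z ^ N * u)) = conj (ζ (N + 1)) * z ^ (N + 1) * u :=
      fun u => by ring
    rw [cdPair_succ]
    simp only [eval_mul, eval_C, eval_sub, eval_add, eval_X, eval_conjReflect hc hz,
      eval_conjReflect hd hz, hrot]
    rw [norm_sq_add_norm_sq_mul_sub_mul_conj, hw, sq_invSqrtOneAddNormSq_mul, ih, one_mul]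

lemma norm_eval_cdPair_le {z : ℂ} (hz : ‖z‖ ≤ 1) (N : ℕ) :
    ‖(cdPair ζ N).1.eval z‖ ≤ 1 ∧ ‖(cdPair ζ N).2.eval z‖ ≤ 1 := by
  refine ⟨norm_eval_le_of_forall_norm_eq_one (fun w hw => ?_) hz,
    norm_eval_le_of_forall_norm_eq_one (fun w hw => ?_) hz⟩ <;>
  · have := norm_sq_add_norm_sq_eval_cdPair ζ hw N
    nlinarith [sq_nonneg ‖(cdPair ζ N).1.eval w‖, sq_nonneg ‖(cdPair ζ N).2.eval w‖,
      norm_nonneg ((cdPair ζ N).1.eval w), norm_nonneg ((cdPair ζ N).2.eval w)]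

lemma reflectMajorant_nonneg {r : ℝ} (hr : 0 ≤ r) (N : ℕ) : 0 ≤ reflectMajorant ζ r N := by
  induction N with
  | zero => exact zero_le_one
  | succ N ih => exact add_nonneg (mul_nonneg hr ih) (norm_nonneg _)

lemma norm_eval_conjReflect_cdPair_le {r : ℝ} (hr : r ≤ 1) {z : ℂ} (hz : ‖z‖ ≤ r) (N : ℕ) :
    ‖(conjReflect N (cdPair ζ N).1).eval z‖ ≤ reflectMajorant ζ r N ∧
      ‖(conjReflect N (cdPair ζ N).2).eval z‖ ≤ reflectMajorant ζ r N := by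
  induction N with
  | zero => simp [cdPair, conjReflect, reflectMajorant]
  | succ N ih =>
    obtain ⟨hc, hd⟩ := norm_eval_cdPair_le ζ (hz.trans hr) N
    rw [(conjReflect_cdPair_succ ζ N).1, (conjReflect_cdPair_succ ζ N).2]
    simp only [eval_mul, eval_C, eval_sub, eval_add, eval_X]
    rw [sub_eq_add_neg, ← mul_neg]
    exact ⟨norm_invSqrtOneAddNormSq_mul_mul_add_le _ hz ih.1 (by rwa [norm_neg]),
      norm_invSqrtOneAddNormSq_mul_mul_add_le _ hz ih.2 hc⟩

lemma norm_eval_cdPair_succ_sub_le {r : ℝ} (hr : r ≤ 1) {z : ℂ} (hz : ‖z‖ ≤ r) (N : ℕ) :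
    ‖(cdPair ζ (N + 1)).1.eval z - (cdPair ζ N).1.eval z‖ ≤
        ‖ζ (N + 1)‖ ^ 2 + ‖ζ (N + 1)‖ * reflectMajorant ζ r N ∧
      ‖(cdPair ζ (N + 1)).2.eval z - (cdPair ζ N).2.eval z‖ ≤
        ‖ζ (N + 1)‖ ^ 2 + ‖ζ (N + 1)‖ * reflectMajorant ζ r N := by
  have hz1 := hz.trans hr
  obtain ⟨hc, hd⟩ := norm_eval_cdPair_le ζ hz1 N
  obtain ⟨hGc, hGd⟩ := norm_eval_conjReflect_cdPair_le ζ hr hz N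
  have hterm : ∀ g : ℂ, ‖g‖ ≤ reflectMajorant ζ r N →
      ‖conj (ζ (N + 1)) * (z * g)‖ ≤ ‖ζ (N + 1)‖ * reflectMajorant ζ r N := fun g hg => by
    rw [norm_mul, norm_mul, Complex.norm_conj]
    exact mul_le_mul_of_nonneg_left ((mul_le_of_le_one_left (norm_nonneg g) hz1).trans hg)
      (norm_nonneg _)
  rw [cdPair_succ]
  simp only [eval_mul, eval_C, eval_sub, eval_add, eval_X]
  constructor
  · have := norm_invSqrtOneAddNormSq_mul_add_sub_le (ζ (N + 1)) hc
      (-(conj (ζ (N + 1)) * (z * (conjReflect N (cdPair ζ N).2).eval z)))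
    rw [← sub_eq_add_neg, norm_neg] at this
    exact this.trans (add_le_add le_rfl (hterm _ hGd))
  · exact (norm_invSqrtOneAddNormSq_mul_add_sub_le (ζ (N + 1)) hd _).trans
      (add_le_add le_rfl (hterm _ hGc))

variable {ζ}

lemma summable_sq_reflectMajorant (hζ : Summable fun k : ℕ => ‖ζ (k + 1)‖ ^ 2) {r : ℝ}
    (hr0 : 0 ≤ r) (hr1 : r < 1) : Summable fun N => reflectMajorant ζ r N ^ 2 := by
  have h1r : 0 < 1 - r := sub_pos.mpr hr1
  refine summable_of_le_mul_add (fun N => sq_nonneg _) hr1 (fun N => by positivity)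
    (hζ.div_const (1 - r)) fun N => ?_
  -- `(r m + t)² ≤ r m² + (1 - r) (t / (1 - r))²` by convexity of the square
  rw [reflectMajorant, ← sub_le_iff_le_add', le_div_iff₀ h1r]
  nlinarith [mul_nonneg hr0 (sq_nonneg ((1 - r) * reflectMajorant ζ r N - ‖ζ (N + 1)‖))]

lemma summable_norm_sq_add_mul_reflectMajorant (hζ : Summable fun k : ℕ => ‖ζ (k + 1)‖ ^ 2)
    {r : ℝ} (hr0 : 0 ≤ r) (hr1 : r < 1) :
    Summable fun N => ‖ζ (N + 1)‖ ^ 2 + ‖ζ (N + 1)‖ * reflectMajorant ζ r N := by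
  refine .of_nonneg_of_le (fun N => add_nonneg (sq_nonneg _)
    (mul_nonneg (norm_nonneg _) (reflectMajorant_nonneg ζ hr0 N))) (fun N => ?_)
    ((hζ.mul_left 2).add (summable_sq_reflectMajorant hζ hr0 hr1))
  nlinarith [sq_nonneg (‖ζ (N + 1)‖ - reflectMajorant ζ r N)]

lemma exists_nhds_summable_norm_eval_cdPair_succ_sub_le
    (hζ : Summable fun k : ℕ => ‖ζ (k + 1)‖ ^ 2) {z : ℂ} (hz : ‖z‖ < 1) :
    ∃ t ∈ 𝓝 z, ∃ u : ℕ → ℝ, Summable u ∧ ∀ N, ∀ y ∈ t,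
      ‖(cdPair ζ (N + 1)).1.eval y - (cdPair ζ N).1.eval y‖ ≤ u N ∧
        ‖(cdPair ζ (N + 1)).2.eval y - (cdPair ζ N).2.eval y‖ ≤ u N := by
  obtain ⟨r, hzr, hr1⟩ := exists_between hz
  refine ⟨closedBall 0 r, closedBall_mem_nhds_of_mem (mem_ball_zero_iff.mpr hzr), _,
    summable_norm_sq_add_mul_reflectMajorant hζ ((norm_nonneg z).trans hzr.le) hr1,
    fun N y hy => norm_eval_cdPair_succ_sub_le ζ hr1.le (mem_closedBall_zero_iff.mp hy) N⟩

end cdPair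

/-- If `ζ = (ζ_k)_{k ≥ 1}` is square summable, then the polynomials `c_N` and `d_N`
converge, uniformly on every compact subset of the open unit disc, to holomorphic
functions `c, d` on the disc. -/
theorem stmt0 (ζ : ℕ → ℂ) (hζ : Summable fun k : ℕ => ‖ζ (k + 1)‖ ^ 2) :
    ∃ c d : ℂ → ℂ,
      DifferentiableOn ℂ c (Metric.ball (0 : ℂ) 1) ∧
      DifferentiableOn ℂ d (Metric.ball (0 : ℂ) 1) ∧
      ∀ K : Set ℂ, K ⊆ Metric.ball (0 : ℂ) 1 → IsCompact K →
        TendstoUniformlyOn (fun N z => ((cdPair ζ N).1).eval z) c Filter.atTop K ∧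
        TendstoUniformlyOn (fun N z => ((cdPair ζ N).2).eval z) d Filter.atTop K := by
  have hbound := fun z (hz : z ∈ ball (0 : ℂ) 1) =>
    exists_nhds_summable_norm_eval_cdPair_succ_sub_le hζ (mem_ball_zero_iff.mp hz)
  have hc := tendstoLocallyUniformlyOn_of_forall_nhds_norm_succ_sub_le
    (f := fun N z => (cdPair ζ N).1.eval z) fun z hz => by
      obtain ⟨t, ht, u, hu, h⟩ := hbound z hz
      exact ⟨t, ht, u, hu, fun N y hy => (h N y hy).1⟩
  have hd := tendstoLocallyUniformlyOn_of_forall_nhds_norm_succ_sub_le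
    (f := fun N z => (cdPair ζ N).2.eval z) fun z hz => by
      obtain ⟨t, ht, u, hu, h⟩ := hbound z hz
      exact ⟨t, ht, u, hu, fun N y hy => (h N y hy).2⟩
  have hpoly (p : ℂ[X]) : DifferentiableOn ℂ (fun z => p.eval z) (ball 0 1) :=
    p.differentiable.differentiableOn
  refine ⟨_, _, hc.differentiableOn (.of_forall fun N => hpoly _) isOpen_ball,
    hd.differentiableOn (.of_forall fun N => hpoly _) isOpen_ball, fun K hK hKc => ?_⟩
  rw [tendstoLocallyUniformlyOn_iff_forall_isCompact isOpen_ball] at hc hd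
  exact ⟨hc K hK hKc, hd K hK hKc⟩
end

section
/- Let ζ = (ζ_k)_{k≥1} be a sequence of complex numbers with S := Σ_{k≥1} |ζ_k|² < ∞. Then for every N ≥ 0 and every n ≥ 1, the coefficient of zⁿ in the polynomial d_N satisfies |(d_N)_n| ≤ Σ_{λ ⊢ n} S^{ℓ(λ)}, where the sum is over all partitions λ of n and ℓ(λ) denotes the number of parts of λ. -/
open Polynomial

/-!
Comparing coefficients in the recursion gives
`|(d_{N+1})_n| ≤ |(d_N)_n| + |ζ_{N+1}| |(c_N)_{N+1-n}|` for `1 ≤ n ≤ N + 1`, and symmetrically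
for `c`. Unfolding this twice, every step contributes a factor `|ζ_i| |ζ_j|` with `i < j`, and the
intervals `[i, j]` picked up along the way are disjoint, with lengths summing to `n`. So `|(d_N)_n|`
is dominated by `∑_{λ ⊢ n} ∏_{d ∈ λ} T_d(N)`, where `T_d(N) = ∑_{v + d ≤ N} |ζ_v| |ζ_{v+d}|`
(`dMajorant`). This majorant absorbs the recursion because raising the weights `t` to `t'` raises
`∏_{d ∈ λ} t_d` by at least `∑_{d ∈ λ} (t'_d - t_d) ∏_{λ ∖ d} t`, and removing a part `d` from the
partitions of `n` containing it gives the partitions of `n - d`. Finally `T_d(N) ≤ S` by AM-GM.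
-/

open Finset

theorem Multiset.sum_toFinset_le_sum_map {α M : Type*} [DecidableEq α] [AddCommMonoid M]
    [PartialOrder M] [IsOrderedAddMonoid M] {g : α → M} (hg : ∀ a, 0 ≤ g a) (s : Multiset α) :
    ∑ a ∈ s.toFinset, g a ≤ (s.map g).sum := by
  rw [sum_eq_multiset_sum, Multiset.toFinset_val,
    ← add_tsub_cancel_of_le (Multiset.dedup_le s), Multiset.map_add, Multiset.sum_add,
    add_tsub_cancel_of_le (Multiset.dedup_le s)]
  exact le_add_of_nonneg_right (Multiset.sum_nonneg fun x hx => by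
    obtain ⟨a, -, rfl⟩ := Multiset.mem_map.mp hx; exact hg a)

noncomputable def partitionProdSum {R : Type*} [CommSemiring R] (t : ℕ → R) (n : ℕ) : R :=
  ∑ p : n.Partition, (p.parts.map t).prod

theorem partitionProdSum_zero {R : Type*} [CommSemiring R] (t : ℕ → R) :
    partitionProdSum t 0 = 1 := by
  simp [partitionProdSum]

section OrderedSemiring

variable {R : Type*} [CommSemiring R] [PartialOrder R] [IsOrderedRing R]

theorem partitionProdSum_nonneg {t : ℕ → R} (ht : ∀ d, 0 ≤ t d) (n : ℕ) :
    0 ≤ partitionProdSum t n :=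
  sum_nonneg fun _ _ => Multiset.prod_map_nonneg fun d _ => ht d

theorem partitionProdSum_mono {t t' : ℕ → R} (ht : ∀ d, 0 ≤ t d) (htt' : ∀ d, t d ≤ t' d)
    (n : ℕ) : partitionProdSum t n ≤ partitionProdSum t' n :=
  sum_le_sum fun _ _ => Multiset.prod_map_le_prod_map₀ _ _ (fun d _ => ht d) (fun d _ => htt' d)

end OrderedSemiring

section OrderedRing

variable {R : Type*} [CommRing R] [PartialOrder R] [IsOrderedRing R]

theorem Multiset.prod_map_add_sum_map_sub_mul_prod_erase_le {α : Type*} [DecidableEq α]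
    {t t' : α → R} (ht : ∀ a, 0 ≤ t a) (htt' : ∀ a, t a ≤ t' a) (s : Multiset α) :
    (s.map t).prod + (s.map fun a => (t' a - t a) * ((s.erase a).map t).prod).sum ≤
      (s.map t').prod := by
  induction s using Multiset.induction with
  | empty => simp
  | cons c s ih =>
    have hsum : (s.map fun a => (t' a - t a) * (((c ::ₘ s).erase a).map t).prod).sum =
        t c * (s.map fun a => (t' a - t a) * ((s.erase a).map t).prod).sum := by
      rw [← Multiset.sum_map_mul_left]
      refine congrArg Multiset.sum (Multiset.map_congr rfl fun a ha => ?_)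
      rw [Multiset.erase_cons_tail_of_mem ha, Multiset.map_cons, Multiset.prod_cons]
      ring
    simp only [Multiset.map_cons, Multiset.prod_cons, Multiset.sum_cons, Multiset.erase_cons_head]
    rw [hsum]
    have hmono : (s.map t).prod ≤ (s.map t').prod :=
      Multiset.prod_map_le_prod_map₀ _ _ (fun a _ => ht a) (fun a _ => htt' a)
    calc t c * (s.map t).prod + ((t' c - t c) * (s.map t).prod +
          t c * (s.map fun a => (t' a - t a) * ((s.erase a).map t).prod).sum)
        ≤ t c * (s.map t).prod + ((t' c - t c) * (s.map t).prod +
          t c * ((s.map t').prod - (s.map t).prod)) := by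
          gcongr
          · exact ht c
          · exact le_sub_iff_add_le'.mpr ih
      _ = t' c * (s.map t).prod + t c * ((s.map t').prod - (s.map t).prod) := by ring
      _ ≤ t' c * (s.map t).prod + t' c * ((s.map t').prod - (s.map t).prod) :=
          add_le_add le_rfl (mul_le_mul_of_nonneg_right (htt' c) (sub_nonneg.mpr hmono))
      _ = t' c * (s.map t').prod := by ring

theorem partitionProdSum_add_sum_le {t t' : ℕ → R} (ht : ∀ d, 0 ≤ t d)
    (htt' : ∀ d, t d ≤ t' d) (n : ℕ) :
    partitionProdSum t n + ∑ d ∈ Icc 1 n, (t' d - t d) * partitionProdSum t (n - d) ≤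
      partitionProdSum t' n := by
  classical
  have hremove : ∀ d ∈ Icc 1 n, (t' d - t d) * partitionProdSum t (n - d) =
      ∑ p : n.Partition,
        if d ∈ p.parts then (t' d - t d) * ((p.parts.erase d).map t).prod else 0 := by
    intro d hd
    obtain ⟨hd1, hdn⟩ := mem_Icc.mp hd
    rw [partitionProdSum, mul_sum, ← sum_filter,
      ← (Nat.Partition.partitionWithPartEquiv hd1 hdn).sum_comp]
    simp only [Nat.Partition.partitionWithPartEquiv_apply_parts]
    exact (sum_subtype _ (by simp)
      fun p : n.Partition => (t' d - t d) * ((p.parts.erase d).map t).prod).symm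
  rw [sum_congr rfl hremove, sum_comm, partitionProdSum, partitionProdSum,
    ← sum_add_distrib]
  refine sum_le_sum fun p _ => ?_
  have hsub : (Icc 1 n).filter (· ∈ p.parts) ⊆ p.parts.toFinset := fun d hd => by
    simpa using (mem_filter.mp hd).2
  calc (p.parts.map t).prod + ∑ d ∈ Icc 1 n,
        (if d ∈ p.parts then (t' d - t d) * ((p.parts.erase d).map t).prod else 0)
      ≤ (p.parts.map t).prod +
          (p.parts.map fun d => (t' d - t d) * ((p.parts.erase d).map t).prod).sum := by
        have hg : ∀ d, 0 ≤ (t' d - t d) * ((p.parts.erase d).map t).prod := fun d =>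
          mul_nonneg (sub_nonneg.mpr (htt' d)) (Multiset.prod_map_nonneg fun e _ => ht e)
        rw [← sum_filter]
        gcongr
        exact (sum_le_sum_of_subset_of_nonneg hsub fun d _ _ => hg d).trans
          (Multiset.sum_toFinset_le_sum_map hg _)
    _ ≤ (p.parts.map t').prod := Multiset.prod_map_add_sum_map_sub_mul_prod_erase_le ht htt' _

end OrderedRing

theorem coeff_sum_C_mul_X_pow_sub {R : Type*} [Semiring R] (g : ℕ → R) (N n : ℕ) :
    (∑ k ∈ range (N + 1), C (g k) * X ^ (N + 1 - k)).coeff n =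
      if 1 ≤ n ∧ n ≤ N + 1 then g (N + 1 - n) else 0 := by
  simp only [finsetSum_coeff, coeff_C_mul_X_pow]
  split_ifs with h
  · rw [sum_eq_single (N + 1 - n) (fun k hk hkn => if_neg (by grind))
      (fun h' => absurd (mem_range.mpr (by omega)) h'), if_pos (by omega)]
  · exact sum_eq_zero fun k hk => if_neg (by grind)

theorem norm_ofReal_inv_sqrt_one_add_sq_le_one (x : ℝ) :
    ‖(((Real.sqrt (1 + x ^ 2))⁻¹ : ℝ) : ℂ)‖ ≤ 1 := by
  rw [Complex.norm_real, Real.norm_eq_abs, abs_of_nonneg (by positivity)]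
  exact inv_le_one_of_one_le₀ (Real.one_le_sqrt.mpr (by nlinarith))

theorem norm_coeff_cdPair_succ_fst_le (ζ : ℕ → ℂ) (N m : ℕ) :
    ‖(cdPair ζ (N + 1)).1.coeff m‖ ≤ ‖(cdPair ζ N).1.coeff m‖ +
      ‖ζ (N + 1)‖ * if 1 ≤ m ∧ m ≤ N + 1 then ‖(cdPair ζ N).2.coeff (N + 1 - m)‖ else 0 := by
  rw [cdPair, coeff_C_mul, coeff_sub, coeff_C_mul, coeff_sum_C_mul_X_pow_sub, norm_mul]
  refine (mul_le_of_le_one_left (norm_nonneg _)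
    (norm_ofReal_inv_sqrt_one_add_sq_le_one _)).trans ((norm_sub_le _ _).trans ?_)
  rw [norm_mul, RCLike.norm_conj, apply_ite norm, norm_zero, RCLike.norm_conj]

theorem norm_coeff_cdPair_succ_snd_le (ζ : ℕ → ℂ) (N n : ℕ) :
    ‖(cdPair ζ (N + 1)).2.coeff n‖ ≤ ‖(cdPair ζ N).2.coeff n‖ +
      ‖ζ (N + 1)‖ * if 1 ≤ n ∧ n ≤ N + 1 then ‖(cdPair ζ N).1.coeff (N + 1 - n)‖ else 0 := by
  rw [cdPair, coeff_C_mul, coeff_add, coeff_C_mul, coeff_sum_C_mul_X_pow_sub, norm_mul]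
  refine (mul_le_of_le_one_left (norm_nonneg _)
    (norm_ofReal_inv_sqrt_one_add_sq_le_one _)).trans ((norm_add_le _ _).trans ?_)
  rw [norm_mul, RCLike.norm_conj, apply_ite norm, norm_zero, RCLike.norm_conj]

noncomputable def pairSum (ζ : ℕ → ℂ) (d M : ℕ) : ℝ :=
  ∑ v ∈ range (M - d), ‖ζ (v + 1)‖ * ‖ζ (v + 1 + d)‖

theorem pairSum_nonneg (ζ : ℕ → ℂ) (d M : ℕ) : 0 ≤ pairSum ζ d M :=
  sum_nonneg fun _ _ => by positivity

theorem pairSum_succ (ζ : ℕ → ℂ) (d M : ℕ) :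
    pairSum ζ d (M + 1) =
      pairSum ζ d M + if d ≤ M then ‖ζ (M + 1 - d)‖ * ‖ζ (M + 1)‖ else 0 := by
  unfold pairSum
  split_ifs with h
  · rw [show M + 1 - d = M - d + 1 by omega, sum_range_succ,
      show M - d + 1 + d = M + 1 by omega, show M - d + 1 = M + 1 - d by omega]
  · rw [show M + 1 - d = M - d by omega, add_zero]

theorem pairSum_mono (ζ : ℕ → ℂ) (d : ℕ) : Monotone (pairSum ζ d) :=
  monotone_nat_of_le_succ fun M => by
    rw [pairSum_succ]
    exact le_add_of_nonneg_right (by positivity)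

theorem pairSum_le_tsum (ζ : ℕ → ℂ) (hζ : Summable fun k : ℕ => ‖ζ (k + 1)‖ ^ 2) (d M : ℕ) :
    pairSum ζ d M ≤ ∑' k : ℕ, ‖ζ (k + 1)‖ ^ 2 := by
  have hshift : ∀ c K, ∑ v ∈ range K, ‖ζ (v + c + 1)‖ ^ 2 ≤ ∑' k : ℕ, ‖ζ (k + 1)‖ ^ 2 :=
    fun c K => by
      have := sum_map (range K) (addRightEmbedding c) (fun k => ‖ζ (k + 1)‖ ^ 2)
      simp only [addRightEmbedding_apply] at this
      exact this ▸ hζ.sum_le_tsum _ fun _ _ => by positivity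
  calc pairSum ζ d M
      ≤ ∑ v ∈ range (M - d), (‖ζ (v + 0 + 1)‖ ^ 2 + ‖ζ (v + d + 1)‖ ^ 2) / 2 :=
        sum_le_sum fun v _ => by
          rw [add_zero, add_right_comm]
          nlinarith [sq_nonneg (‖ζ (v + 1)‖ - ‖ζ (v + d + 1)‖)]
    _ ≤ ∑' k : ℕ, ‖ζ (k + 1)‖ ^ 2 := by
      rw [← sum_div, sum_add_distrib]
      linarith [hshift 0 (M - d), hshift d (M - d)]

noncomputable def dMajorant (ζ : ℕ → ℂ) (N n : ℕ) : ℝ :=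
  partitionProdSum (pairSum ζ · N) n

-- Unrolls the recursion for `c`: step `j` contributes `|ζ_j| |(d_{j-1})_{j-m}|`.
noncomputable def cMajorant (ζ : ℕ → ℂ) (N m : ℕ) : ℝ :=
  ∑ j ∈ range N, if m ≤ j + 1 then ‖ζ (j + 1)‖ * dMajorant ζ j (j + 1 - m) else 0

theorem dMajorant_nonneg (ζ : ℕ → ℂ) (N n : ℕ) : 0 ≤ dMajorant ζ N n :=
  partitionProdSum_nonneg (fun d => pairSum_nonneg ζ d N) n

theorem dMajorant_mono (ζ : ℕ → ℂ) (n : ℕ) : Monotone fun N => dMajorant ζ N n :=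
  fun _ _ h => partitionProdSum_mono (fun d => pairSum_nonneg ζ d _)
    (fun d => pairSum_mono ζ d h) n

theorem dMajorant_le (ζ : ℕ → ℂ) (hζ : Summable fun k : ℕ => ‖ζ (k + 1)‖ ^ 2) (N n : ℕ) :
    dMajorant ζ N n ≤
      ∑ lam : Nat.Partition n, (∑' k : ℕ, ‖ζ (k + 1)‖ ^ 2) ^ Multiset.card lam.parts := by
  unfold dMajorant partitionProdSum
  refine sum_le_sum fun lam _ => ?_
  rw [← Multiset.prod_replicate, ← Multiset.map_const']
  exact Multiset.prod_map_le_prod_map₀ _ _ (fun d _ => pairSum_nonneg ζ d N)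
    (fun d _ => pairSum_le_tsum ζ hζ d N)

theorem dMajorant_add_mul_cMajorant_le (ζ : ℕ → ℂ) {N n : ℕ} (hn : n ≤ N + 1) :
    dMajorant ζ N n + ‖ζ (N + 1)‖ * cMajorant ζ N (N + 1 - n) ≤ dMajorant ζ (N + 1) n := by
  refine le_trans ?_ (partitionProdSum_add_sum_le (t := (pairSum ζ · N))
    (t' := (pairSum ζ · (N + 1))) (fun d => pairSum_nonneg ζ d N)
    (fun d => pairSum_mono ζ d N.le_succ) n)
  refine add_le_add le_rfl ?_
  have hIcc : Icc 1 n = (range n).map (addRightEmbedding 1) := by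
    rw [range_eq_Ico, map_add_right_Ico, zero_add, Ico_add_one_right_eq_Icc]
  -- Reindex `j = N - 1 - k`: the interval `[j + 1, N + 1]` added at this step has length `k + 1`.
  rw [cMajorant, mul_sum, ← sum_range_reflect, hIcc, sum_map]
  calc _ = ∑ k ∈ (range N).filter (· < n),
          ‖ζ (N + 1)‖ * ‖ζ (N - k)‖ * dMajorant ζ (N - 1 - k) (n - (k + 1)) := by
        rw [sum_filter]
        refine sum_congr rfl fun k hk => ?_
        have hkN := mem_range.mp hk
        rw [show N - 1 - k + 1 = N - k by omega, show N - k - (N + 1 - n) = n - (k + 1) by omega,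
          if_congr (show N + 1 - n ≤ N - k ↔ k < n by omega) rfl rfl, mul_ite, mul_zero, mul_assoc]
    _ ≤ ∑ k ∈ (range N).filter (· < n),
          (pairSum ζ (k + 1) (N + 1) - pairSum ζ (k + 1) N) * dMajorant ζ N (n - (k + 1)) := by
        refine sum_le_sum fun k hk => ?_
        have hkN := mem_range.mp (mem_filter.mp hk).1
        rw [pairSum_succ, add_sub_cancel_left, if_pos (by omega),
          show N + 1 - (k + 1) = N - k by omega, mul_comm ‖ζ (N + 1)‖]
        exact mul_le_mul_of_nonneg_left (dMajorant_mono ζ _ (by omega)) (by positivity)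
    _ ≤ ∑ k ∈ range n,
          (pairSum ζ (k + 1) (N + 1) - pairSum ζ (k + 1) N) * dMajorant ζ N (n - (k + 1)) :=
        sum_le_sum_of_subset_of_nonneg (fun k hk => mem_range.mpr (mem_filter.mp hk).2)
          fun k _ _ => mul_nonneg (sub_nonneg.mpr (pairSum_mono ζ _ N.le_succ))
            (dMajorant_nonneg ζ N _)

theorem norm_coeff_cdPair_le (ζ : ℕ → ℂ) (N : ℕ) :
    (∀ m, ‖(cdPair ζ N).1.coeff m‖ ≤ cMajorant ζ N m) ∧
      ∀ n, ‖(cdPair ζ N).2.coeff n‖ ≤ dMajorant ζ N n := by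
  induction N with
  | zero =>
    refine ⟨fun m => by simp [cdPair, cMajorant], fun n => ?_⟩
    rcases n with _ | n
    · simp [cdPair, dMajorant, partitionProdSum_zero]
    · simpa [cdPair, coeff_one] using dMajorant_nonneg ζ 0 (n + 1)
  | succ N ih =>
    obtain ⟨hc, hd⟩ := ih
    refine ⟨fun m => (norm_coeff_cdPair_succ_fst_le ζ N m).trans ?_,
      fun n => (norm_coeff_cdPair_succ_snd_le ζ N n).trans ?_⟩
    · rw [cMajorant, sum_range_succ, ← cMajorant]
      refine add_le_add (hc m) ?_
      split_ifs with h h'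
      · exact mul_le_mul_of_nonneg_left (hd _) (norm_nonneg _)
      · omega
      · rw [mul_zero]; exact mul_nonneg (norm_nonneg _) (dMajorant_nonneg ζ N _)
      · rw [mul_zero]
    · split_ifs with h
      · exact (add_le_add (hd n) (mul_le_mul_of_nonneg_left (hc _) (norm_nonneg _))).trans
          (dMajorant_add_mul_cMajorant_le ζ h.2)
      · rw [mul_zero, add_zero]
        exact (hd n).trans (dMajorant_mono ζ n N.le_succ)

theorem stmt2_general (ζ : ℕ → ℂ) (hζ : Summable fun k : ℕ => ‖ζ (k + 1)‖ ^ 2)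
    (N n : ℕ) :
    ‖((cdPair ζ N).2).coeff n‖ ≤
      ∑ lam : Nat.Partition n,
        (∑' k : ℕ, ‖ζ (k + 1)‖ ^ 2) ^ (Multiset.card lam.parts) :=
  ((norm_coeff_cdPair_le ζ N).2 n).trans (dMajorant_le ζ hζ N n)

/-- If `S = Σ_{k≥1} |ζ_k|² < ∞`, then for every `N ≥ 0` and every `n ≥ 1`, the `n`-th
coefficient of `d_N` satisfies `|(d_N)_n| ≤ Σ_{λ ⊢ n} S^{ℓ(λ)}`, the sum being over all
partitions `λ` of `n`, with `ℓ(λ)` the number of parts. -/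
theorem stmt2 (ζ : ℕ → ℂ) (hζ : Summable fun k : ℕ => ‖ζ (k + 1)‖ ^ 2)
    (N n : ℕ) (hn : 1 ≤ n) :
    ‖((cdPair ζ N).2).coeff n‖ ≤
      ∑ lam : Nat.Partition n,
        (∑' k : ℕ, ‖ζ (k + 1)‖ ^ 2) ^ (Multiset.card lam.parts) :=
  stmt2_general ζ hζ N n
end

section
/- Let x : ℕ → ℂ satisfy x₀ = 0 and Σ_{n≥1} n·|x_n|² < ∞. For i, j ∈ ℕ set K_{ij} := Σ_{n≥0} x_{i+n}·conj(x_{j+n}) (an absolutely convergent sum) and K'_{ij} := K_{i+1, j+1}. Then the matrices (K_{ij}) and (K'_{ij}) define bounded positive operators T and T' on ℓ²(ℕ), the operators 1 + T and 1 + T' are invertible, and, with v ∈ ℓ²(ℕ) denoting the vector v_i = x_i and e₀ the first standard basis vector, one has ⟨e₀, (1+T)^{-1} e₀⟩ · (1 + ⟨v, (1+T')^{-1} v⟩) = 1. -/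
open scoped ComplexOrder

noncomputable section

/-- `ℓ²(ℕ)`, the Hilbert space of square-summable complex sequences. -/
abbrev ellTwo : Type := lp (fun _ : ℕ => ℂ) 2

/-!
Let `A` be the Hankel operator with matrix `x_{i+j}`: it is Hilbert–Schmidt, since
`∑_{i,j} |x_{i+j}|² = ∑_n (n+1) |x_n|²`, and `T = A A†`. Deleting the first column of `A` gives the
Hankel operator `A'` of the shifted symbol, so `T' = A' A'†` and `T = T' + v v*` with `v = A e₀`.
For `c = ⟪v, (1+T)⁻¹ v⟫` the Sherman–Morrison formula then gives `(1 - c)(1 + ⟪v, (1+T')⁻¹ v⟫) = 1`.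
Finally `⟪e₀, (1+T)⁻¹ e₀⟫ = 1 - c`: as the matrix of `A` is symmetric, coordinatewise conjugation
`J` satisfies `J A J = A†`, and applying `J` to `(1 + A A†) (1+T)⁻¹ e₀ = e₀` identifies
`(1+T)⁻¹ v` with `A J (1+T)⁻¹ e₀`.
-/

open scoped ComplexConjugate InnerProductSpace InnerProduct lp Ring

section SquareSummable

variable {α E : Type*} [SeminormedAddCommGroup E]

lemma summable_norm_mul_norm_of_summable_sq {f g : α → E} (hf : Summable fun n => ‖f n‖ ^ 2)
    (hg : Summable fun n => ‖g n‖ ^ 2) : Summable fun n => ‖f n‖ * ‖g n‖ :=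
  .of_nonneg_of_le (fun n => by positivity)
    (fun n => by linarith [two_mul_le_add_sq ‖f n‖ ‖g n‖]) ((hf.add hg).div_const 2)

lemma summable_sq_norm_add_of_summable_mul_sq {y : ℕ → E}
    (hy : Summable fun n : ℕ => (n : ℝ) * ‖y n‖ ^ 2) :
    Summable fun p : ℕ × ℕ => ‖y (p.1 + p.2)‖ ^ 2 := by
  have hsucc : Summable fun n : ℕ => ((n : ℝ) + 1) * ‖y n‖ ^ 2 := by
    rw [← summable_nat_add_iff 1] at hy ⊢
    refine .of_nonneg_of_le (fun n => by positivity) (fun n => ?_) (hy.mul_left 2)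
    push_cast
    nlinarith [sq_nonneg ‖y (n + 1)‖]
  rw [← Finset.HasAntidiagonal.sigmaAntidiagonalEquivProd.summable_iff]
  refine (summable_sigma_of_nonneg fun _ => sq_nonneg _).2 ⟨fun n => .of_finite, ?_⟩
  refine hsucc.congr fun n => ?_
  rw [tsum_fintype]
  calc ((n : ℝ) + 1) * ‖y n‖ ^ 2 = ∑ _ : Finset.HasAntidiagonal.antidiagonal n, ‖y n‖ ^ 2 := by
        simp
    _ = _ := Finset.sum_congr rfl fun p _ => by
        simp [Finset.HasAntidiagonal.mem_antidiagonal.1 p.2]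

end SquareSummable

namespace ContinuousLinearMap

variable {𝕜 E : Type*} [RCLike 𝕜] [NormedAddCommGroup E] [InnerProductSpace 𝕜 E]

lemma IsPositive.isUnit_one_add [CompleteSpace E] {T : E →L[𝕜] E} (hT : T.IsPositive) :
    IsUnit (1 + T) := by
  refine isUnit_of_forall_le_norm_inner_map _ one_pos fun u => ?_
  calc ‖u‖ ^ 2 * ((1 : NNReal) : ℝ) ≤ RCLike.re ⟪(1 + T) u, u⟫_𝕜 := by
        simpa [inner_add_left, inner_self_eq_norm_sq] using hT.re_inner_nonneg_left u
    _ ≤ ‖⟪(1 + T) u, u⟫_𝕜‖ := RCLike.re_le_norm _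

/-- Sherman–Morrison: the resolvent identity `N⁻¹ = (N + vv*)⁻¹ + N⁻¹ (vv*) (N + vv*)⁻¹` gives
`t = c + c t` for `c = ⟪v, (N + vv*)⁻¹ v⟫` and `t = ⟪v, N⁻¹ v⟫`. -/
lemma one_sub_inner_inverse_add_rankOne_mul {N : E →L[𝕜] E} (v : E) (hN : IsUnit N)
    (hNv : IsUnit (N + InnerProductSpace.rankOne 𝕜 v v)) :
    (1 - ⟪v, (N + InnerProductSpace.rankOne 𝕜 v v)⁻¹ʳ v⟫_𝕜) * (1 + ⟪v, N⁻¹ʳ v⟫_𝕜) = 1 := by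
  set q := InnerProductSpace.rankOne 𝕜 v v
  set R := (N + q)⁻¹ʳ
  have hres : N⁻¹ʳ = R + N⁻¹ʳ * q * R := by
    calc N⁻¹ʳ = N⁻¹ʳ * ((N + q) * R) := by rw [Ring.mul_inverse_cancel _ hNv, mul_one]
      _ = N⁻¹ʳ * N * R + N⁻¹ʳ * q * R := by noncomm_ring
      _ = R + N⁻¹ʳ * q * R := by rw [Ring.inverse_mul_cancel _ hN, one_mul]
  have key : ⟪v, N⁻¹ʳ v⟫_𝕜 = ⟪v, R v⟫_𝕜 + ⟪v, R v⟫_𝕜 * ⟪v, N⁻¹ʳ v⟫_𝕜 := by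
    conv_lhs => rw [hres]
    simp [q, mul_apply_eq_comp, inner_add_right, inner_smul_right]
  linear_combination key

/-- `star` is a conjugation for which `A` is symmetric. With `N = 1 + A A†`, applying it to
`N (N⁻¹ e) = e` gives `w + A† A w = e` for `w = star (N⁻¹ e)`, so that `N⁻¹ (A e) = A w`. -/
lemma inner_inverse_one_add_mul_adjoint_add_inner_map [CompleteSpace E] [StarAddMonoid E]
    (hstar : ∀ u w : E, ⟪star u, star w⟫_𝕜 = ⟪w, u⟫_𝕜) {A : E →L[𝕜] E}
    (hA : ∀ u, star (A u) = (A†) (star u)) {e : E} (he : star e = e) :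
    ⟪e, (1 + A * A†)⁻¹ʳ e⟫_𝕜 + ⟪A e, (1 + A * A†)⁻¹ʳ (A e)⟫_𝕜 = ⟪e, e⟫_𝕜 := by
  set N := 1 + A * A†
  have hN : IsUnit N := (isPositive_self_comp_adjoint A).isUnit_one_add
  set w := star (N⁻¹ʳ e)
  have hw : w + (A†) (A w) = e := by
    have hNe : N (N⁻¹ʳ e) = e := by
      rw [← mul_apply_eq_comp, Ring.mul_inverse_cancel _ hN, one_apply_eq_self]
    have hA' : A w = star ((A†) (N⁻¹ʳ e)) := by rw [← star_star (A w), hA, star_star]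
    calc w + (A†) (A w) = star (N⁻¹ʳ e + A ((A†) (N⁻¹ʳ e))) := by rw [hA', ← hA, star_add]
      _ = star (N (N⁻¹ʳ e)) := by simp [N, mul_apply_eq_comp]
      _ = e := by rw [hNe, he]
  have hRA : N⁻¹ʳ (A e) = A w := by
    have : N (A w) = A e := by
      rw [← hw]
      simp [N, mul_apply_eq_comp]
    rw [← this, ← mul_apply_eq_comp, Ring.inverse_mul_cancel _ hN, one_apply_eq_self]
  have hsa : IsSelfAdjoint N⁻¹ʳ :=
    ((IsSelfAdjoint.one _).add (IsSelfAdjoint.mul_star_self A)).ringInverse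
  have hsym : ⟪e, N⁻¹ʳ e⟫_𝕜 = ⟪N⁻¹ʳ e, e⟫_𝕜 := by
    rw [← adjoint_inner_left, hsa.adjoint_eq]
  calc ⟪e, N⁻¹ʳ e⟫_𝕜 + ⟪A e, N⁻¹ʳ (A e)⟫_𝕜 = ⟪e, w⟫_𝕜 + ⟪e, (A†) (A w)⟫_𝕜 := by
        rw [hsym, hRA, ← hstar, he, adjoint_inner_right]
    _ = ⟪e, e⟫_𝕜 := by rw [← inner_add_right, hw]

end ContinuousLinearMap

namespace lp

variable {𝕜 ι : Type*} [RCLike 𝕜]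

lemma memℓp_two_iff {f : ι → 𝕜} : Memℓp f 2 ↔ Summable fun i => ‖f i‖ ^ 2 := by
  simpa using memℓp_gen_iff (E := fun _ : ι => 𝕜) (p := 2) (by norm_num)

lemma norm_sq_eq_tsum (f : ℓ²(ι, 𝕜)) : ‖f‖ ^ 2 = ∑' i, ‖f i‖ ^ 2 := by
  simpa using lp.norm_rpow_eq_tsum (p := 2) (by norm_num) f

lemma inner_star_star (u w : ℓ²(ι, 𝕜)) : ⟪star u, star w⟫_𝕜 = ⟪w, u⟫_𝕜 := by
  simp only [lp.inner_eq_tsum, lp.star_apply, RCLike.inner_apply, RCLike.star_def,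
    RCLike.conj_conj, mul_comm]

section Single

variable [DecidableEq ι]

lemma inner_single_one_left (i : ι) (f : ℓ²(ι, 𝕜)) : ⟪lp.single 2 i (1 : 𝕜), f⟫_𝕜 = f i := by
  simp [lp.inner_single_left]

lemma ext_inner_single {M M' : ℓ²(ι, 𝕜) →L[𝕜] ℓ²(ι, 𝕜)}
    (h : ∀ i j, ⟪lp.single 2 i (1 : 𝕜), M (lp.single 2 j 1)⟫_𝕜 =
      ⟪lp.single 2 i (1 : 𝕜), M' (lp.single 2 j 1)⟫_𝕜) : M = M' := by
  refine lp.ext_continuousLinearMap (by norm_num) fun j => ContinuousLinearMap.ext_ring ?_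
  exact lp.ext <| funext fun i => by simpa [inner_single_one_left] using h i j

lemma star_single_one (i : ι) : star (lp.single 2 i 1 : ℓ²(ι, 𝕜)) = lp.single 2 i 1 :=
  lp.ext <| funext fun n => by by_cases h : n = i <;> simp [lp.star_apply, lp.single_apply, h]

end Single

section MatrixOp

variable (a : ι → ι → 𝕜) (ha : Summable fun p : ι × ι => ‖a p.1 p.2‖ ^ 2)

def matrixRow (i : ι) : ℓ²(ι, 𝕜) :=
  ⟨fun j => conj (a i j), memℓp_two_iff.2 (by simpa using ha.prod_factor i)⟩

lemma sq_norm_inner_matrixRow_le (i : ι) (u : ℓ²(ι, 𝕜)) :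
    ‖⟪matrixRow a ha i, u⟫_𝕜‖ ^ 2 ≤ (∑' j, ‖a i j‖ ^ 2) * ‖u‖ ^ 2 := by
  have hrow : ‖matrixRow a ha i‖ ^ 2 = ∑' j, ‖a i j‖ ^ 2 := by
    simp [norm_sq_eq_tsum, matrixRow]
  rw [← hrow, ← mul_pow]
  exact pow_le_pow_left₀ (norm_nonneg _) (norm_inner_le_norm _ _) 2

include ha in
lemma summable_tsum_sq_norm_row : Summable fun i => ∑' j, ‖a i j‖ ^ 2 :=
  ((summable_prod_of_nonneg fun _ => by positivity).1 ha).2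

lemma summable_sq_norm_inner_matrixRow (u : ℓ²(ι, 𝕜)) :
    Summable fun i => ‖⟪matrixRow a ha i, u⟫_𝕜‖ ^ 2 :=
  .of_nonneg_of_le (fun _ => by positivity) (sq_norm_inner_matrixRow_le a ha · u)
    ((summable_tsum_sq_norm_row a ha).mul_right _)

def matrixOp : ℓ²(ι, 𝕜) →L[𝕜] ℓ²(ι, 𝕜) :=
  LinearMap.mkContinuous
    { toFun u := ⟨fun i => ⟪matrixRow a ha i, u⟫_𝕜,
        memℓp_two_iff.2 (summable_sq_norm_inner_matrixRow a ha u)⟩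
      map_add' u w := lp.ext <| funext fun i => inner_add_right _ _ _
      map_smul' c u := lp.ext <| funext fun i => inner_smul_right _ _ _ }
    √(∑' i, ∑' j, ‖a i j‖ ^ 2) fun u => by
      rw [← Real.sqrt_sq (norm_nonneg u), ← Real.sqrt_mul (by positivity)]
      refine Real.le_sqrt_of_sq_le ?_
      rw [norm_sq_eq_tsum, ← tsum_mul_right]
      exact (summable_sq_norm_inner_matrixRow a ha u).tsum_le_tsum
        (sq_norm_inner_matrixRow_le a ha · u) ((summable_tsum_sq_norm_row a ha).mul_right _)

lemma matrixOp_apply (u : ℓ²(ι, 𝕜)) (i : ι) : matrixOp a ha u i = ⟪matrixRow a ha i, u⟫_𝕜 := rfl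

include ha in
lemma summable_norm_mul_conj (i j : ι) : Summable fun n => ‖a i n * conj (a j n)‖ := by
  simpa using summable_norm_mul_norm_of_summable_sq (ha.prod_factor i) (ha.prod_factor j)

variable [DecidableEq ι]

lemma matrixOp_single_apply (i j : ι) : matrixOp a ha (lp.single 2 j 1) i = a i j := by
  simp [matrixOp_apply, lp.inner_single_right, matrixRow]

lemma adjoint_matrixOp_single (i : ι) :
    ((matrixOp a ha)†) (lp.single 2 i 1) = matrixRow a ha i := by
  refine lp.ext <| funext fun n => ?_
  rw [← inner_single_one_left, ContinuousLinearMap.adjoint_inner_right, lp.inner_single_right,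
    matrixOp_single_apply]
  simp [matrixRow]

lemma inner_single_matrixOp_mul_adjoint_single (i j : ι) :
    ⟪lp.single 2 i (1 : 𝕜), (matrixOp a ha * (matrixOp a ha)†) (lp.single 2 j 1)⟫_𝕜 =
      ∑' n, a i n * conj (a j n) := by
  rw [mul_apply_eq_comp, ← ContinuousLinearMap.adjoint_inner_left,
    adjoint_matrixOp_single, adjoint_matrixOp_single, lp.inner_eq_tsum]
  simp [matrixRow, mul_comm]

variable {a} in
lemma star_matrixOp_apply_of_symm (hsymm : ∀ i j, a i j = a j i) (u : ℓ²(ι, 𝕜)) :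
    star (matrixOp a ha u) = ((matrixOp a ha)†) (star u) := by
  have hcol : ∀ i, star (matrixOp a ha (lp.single 2 i 1)) = matrixRow a ha i := fun i =>
    lp.ext <| funext fun j => by simp [lp.star_apply, matrixOp_single_apply, matrixRow, hsymm]
  refine lp.ext <| funext fun i => ?_
  rw [← inner_single_one_left (𝕜 := 𝕜) i (((matrixOp a ha)†) (star u)),
    ContinuousLinearMap.adjoint_inner_right, ← inner_star_star, star_star, hcol, lp.star_apply,
    matrixOp_apply]
  simp

end MatrixOp

section Shift

variable (a : ℕ → ℕ → 𝕜) (ha : Summable fun p : ℕ × ℕ => ‖a p.1 p.2‖ ^ 2)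

include ha in
lemma summable_sq_norm_shift : Summable fun p : ℕ × ℕ => ‖a p.1 (p.2 + 1)‖ ^ 2 :=
  ha.comp_injective (i := fun p : ℕ × ℕ => (p.1, p.2 + 1)) fun p q h => by
    simpa [Prod.ext_iff] using h

lemma matrixOp_mul_adjoint_eq_shift_add_rankOne :
    matrixOp a ha * (matrixOp a ha)† =
      matrixOp (fun i j => a i (j + 1)) (summable_sq_norm_shift a ha) *
          (matrixOp (fun i j => a i (j + 1)) (summable_sq_norm_shift a ha))† +
        InnerProductSpace.rankOne 𝕜 (matrixOp a ha (lp.single 2 0 1))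
          (matrixOp a ha (lp.single 2 0 1)) := by
  refine ext_inner_single fun i j => ?_
  rw [add_apply, inner_add_right, inner_single_matrixOp_mul_adjoint_single,
    inner_single_matrixOp_mul_adjoint_single,
    (summable_norm_mul_conj a ha i j).of_norm.tsum_eq_zero_add]
  simp [inner_smul_right, inner_single_one_left, lp.inner_single_right, matrixOp_single_apply]
  ring

end Shift

end lp

open ContinuousLinearMap in
theorem stmt9_general (x : ℕ → ℂ)
    (hx : Summable fun n : ℕ => (n : ℝ) * ‖x n‖ ^ 2) :
    (∀ i j : ℕ, Summable fun n : ℕ => ‖x (i + n) * starRingEnd ℂ (x (j + n))‖) ∧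
    ∃ T T' : ellTwo →L[ℂ] ellTwo,
      (∀ i j : ℕ,
        (inner ℂ (lp.single 2 i (1 : ℂ)) (T (lp.single 2 j (1 : ℂ))) : ℂ) =
          ∑' n : ℕ, x (i + n) * starRingEnd ℂ (x (j + n))) ∧
      (∀ i j : ℕ,
        (inner ℂ (lp.single 2 i (1 : ℂ)) (T' (lp.single 2 j (1 : ℂ))) : ℂ) =
          ∑' n : ℕ, x (i + 1 + n) * starRingEnd ℂ (x (j + 1 + n))) ∧
      T.IsPositive ∧ T'.IsPositive ∧
      IsUnit (1 + T) ∧ IsUnit (1 + T') ∧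
      ∀ v : ellTwo, (∀ i : ℕ, (v : ∀ _ : ℕ, ℂ) i = x i) →
        (inner ℂ (lp.single 2 0 (1 : ℂ)) (Ring.inverse (1 + T) (lp.single 2 0 (1 : ℂ))) : ℂ) *
            (1 + (inner ℂ v (Ring.inverse (1 + T') v) : ℂ)) = 1 := by
  set a : ℕ → ℕ → ℂ := fun i j => x (i + j)
  have ha : Summable fun p : ℕ × ℕ => ‖a p.1 p.2‖ ^ 2 :=
    summable_sq_norm_add_of_summable_mul_sq hx
  set A := lp.matrixOp a ha
  set A' := lp.matrixOp (fun i j => a i (j + 1)) (lp.summable_sq_norm_shift a ha)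
  have hT : (A * A†).IsPositive := isPositive_self_comp_adjoint A
  have hT' : (A' * A'†).IsPositive := isPositive_self_comp_adjoint A'
  refine ⟨lp.summable_norm_mul_conj a ha, A * A†, A' * A'†,
    lp.inner_single_matrixOp_mul_adjoint_single a ha, fun i j => ?_, hT, hT', hT.isUnit_one_add,
    hT'.isUnit_one_add, fun v hv => ?_⟩
  · rw [lp.inner_single_matrixOp_mul_adjoint_single]
    simp only [a, add_assoc, add_comm 1]
  have hvA : A (lp.single 2 0 1) = v :=
    lp.ext <| funext fun i => by simp [A, lp.matrixOp_single_apply, hv, a]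
  have hsplit : 1 + A * A† = (1 + A' * A'†) + InnerProductSpace.rankOne ℂ v v := by
    rw [lp.matrixOp_mul_adjoint_eq_shift_add_rankOne, hvA, add_assoc]
  have hentry : ⟪lp.single 2 0 1, (1 + A * A†)⁻¹ʳ (lp.single 2 0 1)⟫_ℂ =
      1 - ⟪v, (1 + A * A†)⁻¹ʳ v⟫_ℂ := by
    have h := inner_inverse_one_add_mul_adjoint_add_inner_map lp.inner_star_star
      (lp.star_matrixOp_apply_of_symm ha fun i j => by simp only [a, add_comm])
      (lp.star_single_one 0)
    rw [hvA, lp.inner_single_one_left 0 (lp.single 2 0 (1 : ℂ)), lp.single_apply_self] at h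
    exact eq_sub_of_add_eq h
  rw [hentry, hsplit]
  exact one_sub_inner_inverse_add_rankOne_mul v hT'.isUnit_one_add (hsplit ▸ hT.isUnit_one_add)

/-- Let `x : ℕ → ℂ` with `x₀ = 0` and `Σ n·|x_n|² < ∞`.  Then the sums
`K_{ij} = Σ_{n≥0} x_{i+n}·conj(x_{j+n})` converge absolutely, the matrices `(K_{ij})` and
`(K'_{ij}) = (K_{i+1,j+1})` define bounded positive operators `T, T'` on `ℓ²(ℕ)` (in the
sense that `⟨e_i, T e_j⟩ = K_{ij}` and `⟨e_i, T' e_j⟩ = K_{i+1,j+1}`), the operators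
`1 + T` and `1 + T'` are invertible, and with `v ∈ ℓ²` the vector `v_i = x_i` and `e₀` the
first standard basis vector, `⟨e₀, (1+T)⁻¹ e₀⟩ · (1 + ⟨v, (1+T')⁻¹ v⟩) = 1`. -/
theorem stmt9 (x : ℕ → ℂ) (hx0 : x 0 = 0)
    (hx : Summable fun n : ℕ => (n : ℝ) * ‖x n‖ ^ 2) :
    (∀ i j : ℕ, Summable fun n : ℕ => ‖x (i + n) * starRingEnd ℂ (x (j + n))‖) ∧
    ∃ T T' : ellTwo →L[ℂ] ellTwo,
      (∀ i j : ℕ,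
        (inner ℂ (lp.single 2 i (1 : ℂ)) (T (lp.single 2 j (1 : ℂ))) : ℂ) =
          ∑' n : ℕ, x (i + n) * starRingEnd ℂ (x (j + n))) ∧
      (∀ i j : ℕ,
        (inner ℂ (lp.single 2 i (1 : ℂ)) (T' (lp.single 2 j (1 : ℂ))) : ℂ) =
          ∑' n : ℕ, x (i + 1 + n) * starRingEnd ℂ (x (j + 1 + n))) ∧
      T.IsPositive ∧ T'.IsPositive ∧
      IsUnit (1 + T) ∧ IsUnit (1 + T') ∧
      ∀ v : ellTwo, (∀ i : ℕ, (v : ∀ _ : ℕ, ℂ) i = x i) →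
        (inner ℂ (lp.single 2 0 (1 : ℂ)) (Ring.inverse (1 + T) (lp.single 2 0 (1 : ℂ))) : ℂ) *
            (1 + (inner ℂ v (Ring.inverse (1 + T') v) : ℂ)) = 1 :=
  stmt9_general x hx
end
end

section
/- Let R be a (not necessarily commutative) ring with unit, let g₁, g₂, g₃, … ∈ R, set g₀ = 1, and let h_n := Σ over all compositions (i₁, …, i_l) of n of (−1)^l·g_{i₁}⋯g_{i_l} (with h₀ = 1) be the coefficients of the inverse power series. Then for every i ≥ 0 and j ≥ 1, Σ_{n=j}^{i+j} h_{i+j−n}·g_n = Σ over all compositions (i₁, …, i_l) of i+j with last part i_l ≥ j of (−1)^{l+1}·g_{i₁}·g_{i₂}·⋯·g_{i_l}. -/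
/-!
Group the compositions of `i + j` by their last part `n`. Those with last part `n ≥ j` are
exactly the compositions of `i + j - n` followed by the single part `n`, and appending that part
multiplies the product by `g n` and lengthens the composition by one. So the fibre over `n` sums
to `h_{i+j-n} · g n`, the sign `(-1)^(l+1)` of the longer composition being `(-1)^l` for the
shorter one.
-/

/-- The coefficients of the formal inverse of `Σ g_n zⁿ` (with `g 0 = 1`):
`h_0 = 1` and `h_n = Σ_{(i₁,…,i_l) composition of n} (−1)^l · g_{i₁}⋯g_{i_l}`. -/
noncomputable def invCoeff {R : Type*} [Ring R] (g : ℕ → R) : ℕ → R := fun n =>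
  if n = 0 then 1
  else ∑ I : Composition n, (-1 : R) ^ I.length * (I.blocks.map g).prod

theorem List.dropLast_append_of_getLastD_eq {α : Type*} {l : List α} {a b : α} (hb : b ≠ a)
    (h : l.getLastD a = b) : l.dropLast ++ [b] = l := by
  rcases l.eq_nil_or_concat' with rfl | ⟨L, c, rfl⟩
  · exact absurd h.symm hb
  · simp_all

namespace Composition

variable {N : ℕ}

instance : Subsingleton (Composition 0) :=
  ⟨fun c d => Composition.ext (by rw [c.blocks_eq_nil.2 rfl, d.blocks_eq_nil.2 rfl])⟩

theorem getLastD_blocks_le (c : Composition N) : c.blocks.getLastD 0 ≤ N := by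
  rcases List.mem_cons.1 (List.getLastD_mem_cons (l := c.blocks) (a := 0)) with h | h
  · omega
  · exact c.blocks_le h

theorem sum_filter_getLastD_eq {M : Type*} [AddCommMonoid M] {n : ℕ} (hn : 0 < n) (hnN : n ≤ N)
    (f : List ℕ → M) :
    ∑ c : Composition N with c.blocks.getLastD 0 = n, f c.blocks =
      ∑ c : Composition (N - n), f (c.blocks ++ [n]) := by
  have split (c : Composition N) (hc : c ∈ ({c | c.blocks.getLastD 0 = n} : Finset _)) :
      c.blocks.dropLast ++ [n] = c.blocks :=
    List.dropLast_append_of_getLastD_eq hn.ne' (Finset.mem_filter.1 hc).2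
  symm
  refine Finset.sum_bij' (fun c _ => (c.append (single n hn)).cast (Nat.sub_add_cancel hnN))
    (fun c hc => ⟨c.blocks.dropLast, fun h => c.blocks_pos (List.dropLast_subset _ h), ?_⟩)
    ?_ ?_ ?_ ?_ ?_
  · have := congrArg List.sum (split c hc)
    rw [List.sum_append, c.blocks_sum, List.sum_singleton] at this
    omega
  · simp
  · simp
  · exact fun c _ => Composition.ext (by simp)
  · exact fun c hc => Composition.ext (by simpa using split c hc)
  · simp

end Composition

theorem invCoeff_eq_sum {R : Type*} [Ring R] (g : ℕ → R) (m : ℕ) :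
    invCoeff g m = ∑ I : Composition m, (-1 : R) ^ I.length * (I.blocks.map g).prod := by
  unfold invCoeff
  split_ifs with hm
  · subst hm
    simp [Fintype.sum_subsingleton _ (Composition.ones 0)]
  · rfl

theorem invCoeff_mul_eq_sum {R : Type*} [Ring R] (g : ℕ → R) (m n : ℕ) :
    invCoeff g m * g n = ∑ I : Composition m,
      (-1 : R) ^ ((I.blocks ++ [n]).length + 1) * ((I.blocks ++ [n]).map g).prod := by
  rw [invCoeff_eq_sum, Finset.sum_mul]
  refine Finset.sum_congr rfl fun I _ => ?_
  simp [pow_succ, mul_assoc, Composition.length]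

theorem stmt15_general {R : Type*} [Ring R] (g : ℕ → R) (i j : ℕ) (hj : 1 ≤ j) :
    ∑ n ∈ Finset.Icc j (i + j), invCoeff g (i + j - n) * g n =
      ∑ I : Composition (i + j),
        if j ≤ I.blocks.getLastD 0 then
          (-1 : R) ^ (I.length + 1) * (I.blocks.map g).prod
        else 0 := by
  have hlast : ∀ I ∈ ({I : Composition (i + j) | j ≤ I.blocks.getLastD 0} : Finset _),
      I.blocks.getLastD 0 ∈ Finset.Icc j (i + j) := fun I hI =>
    Finset.mem_Icc.2 ⟨(Finset.mem_filter.1 hI).2, I.getLastD_blocks_le⟩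
  rw [← Finset.sum_filter, ← Finset.sum_fiberwise_of_maps_to hlast]
  refine Finset.sum_congr rfl fun n hn => ?_
  obtain ⟨hjn, hn⟩ := Finset.mem_Icc.1 hn
  rw [Finset.filter_filter, invCoeff_mul_eq_sum,
    ← Composition.sum_filter_getLastD_eq (f := fun l => (-1 : R) ^ (l.length + 1) * (l.map g).prod)
      (by omega) hn]
  exact Finset.sum_congr (Finset.filter_congr fun I _ => by omega) fun I _ => rfl

/-- For every `i ≥ 0` and `j ≥ 1`,
`Σ_{n=j}^{i+j} h_{i+j−n}·g_n = Σ_{I composition of i+j, last part ≥ j} (−1)^{ℓ(I)+1} g_{i₁}⋯g_{i_l}`. -/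
theorem stmt15 {R : Type*} [Ring R] (g : ℕ → R) (hg0 : g 0 = 1) (i j : ℕ) (hj : 1 ≤ j) :
    ∑ n ∈ Finset.Icc j (i + j), invCoeff g (i + j - n) * g n =
      ∑ I : Composition (i + j),
        if j ≤ I.blocks.getLastD 0 then
          (-1 : R) ^ (I.length + 1) * (I.blocks.map g).prod
        else 0 :=
  stmt15_general g i j hj
end

section
/- Let R be an associative algebra over ℚ (not necessarily commutative) with unit and let θ₁, θ₂, θ₃, … ∈ R. For a composition J = (j₁, …, j_m) of a positive integer, set c(J) := Π_{s=1}^{m}(j₁ + ⋯ + j_s)^{-1} ∈ ℚ and θ_J := θ_{j₁}·⋯·θ_{j_m} ∈ R. Define g₀ = 1, g_n := Σ_{J composition of n} c(J)·θ_J for n ≥ 1, and h_n := Σ_{(i₁,…,i_l) composition of n} (−1)^l·g_{i₁}⋯g_{i_l} (with h₀ = 1). Then for every i ≥ 0 and j ≥ 1, Σ_{n=j}^{i+j} h_{i+j−n}·g_n = Σ over all compositions I of i+j of C(I)·θ_I, where C(I) := Σ over all ways of writing I as a concatenation I = I₁⁀I₂⁀⋯⁀I_m of nonempty compositions with the total of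 the last block |I_m| ≥ j, of (−1)^{m+1}·c(I₁)·c(I₂)·⋯·c(I_m). -/
/-- For a list `l = (j₁, …, j_m)` of positive integers (the blocks of a composition),
`cList l = Π_{s=1}^{m} (j₁ + ⋯ + j_s)⁻¹ ∈ ℚ`. -/
def cListQ (l : List ℕ) : ℚ :=
  ∏ s ∈ Finset.range l.length, (((l.take (s + 1)).sum : ℚ))⁻¹

/-- The coefficients `g_n = Σ_{J composition of n} c(J)·θ_J` (with `g_0 = 1`) of the solution
of `g₊' = g₊·θ`, `g₊(0) = 1`. -/
noncomputable def solnCoeff {R : Type*} [Ring R] [Algebra ℚ R] (θ : ℕ → R) : ℕ → R := fun n =>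
  if n = 0 then 1
  else ∑ J : Composition n, cListQ J.blocks • (J.blocks.map θ).prod

/-!
Expanding `h_m = Σ_K Π_{k ∈ K} (-g_k)` and then each `g_k` as a sum over compositions writes
`h_m` as a sum over compositions of compositions of `m` (`Composition.sigmaEquivSigmaPi`), i.e.
over lists `L` of nonempty compositions, of `Ψ(L) = Π_{l ∈ L} (-c(l) θ_l)`. Multiplying by `g_n`
appends one more block of size `n`, so `Σ_{n ≥ j} h_{N-n} g_n` is `-Σ Ψ(L)` over the lists whose
last block has size at least `j`, splitting off the last block being a bijection; and `-Ψ(L)` is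
exactly `(-1)^{m+1} c(I₁)⋯c(I_m) θ_I`.
-/

open List Finset

-- Noncommutative form of `Finset.prod_univ_sum`.
theorem List.prod_ofFn_sum {R : Type*} [Semiring R] :
    ∀ {n : ℕ} {κ : Fin n → Type*} [∀ i, Fintype (κ i)] (f : ∀ i, κ i → R),
      (ofFn fun i => ∑ x, f i x).prod = ∑ x : ∀ i, κ i, (ofFn fun i => f i (x i)).prod
  | 0, _, _, _ => by simp
  | n + 1, κ, _, f => by
    rw [ofFn_succ, prod_cons, List.prod_ofFn_sum, Finset.sum_mul_sum, ← Fintype.sum_prod_type']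
    exact Fintype.sum_equiv (Fin.consEquiv κ) _ _ fun x => by simp [Fin.consEquiv]

theorem List.prod_map_smul {α S M : Type*} [CommMonoid S] [Monoid M] [MulAction S M]
    [IsScalarTower S M M] [SMulCommClass S M M] (L : List α) (q : α → S) (r : α → M) :
    (L.map fun a => q a • r a).prod = (L.map q).prod • (L.map r).prod := by
  induction L <;> simp [*, smul_mul_smul_comm]

theorem List.prod_map_neg_apply {α M : Type*} [Monoid M] [HasDistribNeg M] (L : List α)
    (f : α → M) : (L.map fun a => -f a).prod = (-1) ^ L.length * (L.map f).prod := by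
  rw [← length_map (f := f), ← prod_map_neg, map_map]
  rfl

namespace Composition

theorem ofFn_sigmaCompositionAux {α : Type*} {n : ℕ} (I : Composition n)
    (c : Composition I.length) (φ : List ℕ → α) :
    ofFn (fun i => φ (I.sigmaCompositionAux c i).blocks) =
      (I.blocks.splitWrtComposition c).map φ := by
  refine ext_getElem (by simp [length_gather]) fun k _ _ => ?_
  simp [sigmaCompositionAux]

theorem sum_prod_map_sum_eq_sum_sigma {R : Type*} [Semiring R] (φ : List ℕ → R) (m : ℕ) :
    ∑ K : Composition m, (K.blocks.map fun k => ∑ J : Composition k, φ J.blocks).prod =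
      ∑ p : Σ I : Composition m, Composition I.length,
        ((p.1.blocks.splitWrtComposition p.2).map φ).prod := by
  calc _ = ∑ q : Σ K : Composition m, ∀ i : Fin K.length, Composition (K.blocksFun i),
          (ofFn fun i => φ (q.2 i).blocks).prod := by
        rw [Fintype.sum_sigma]
        refine Finset.sum_congr rfl fun K _ => ?_
        rw [← K.ofFn_blocksFun, map_ofFn]
        exact List.prod_ofFn_sum _
    _ = _ := by
        refine (Fintype.sum_equiv (sigmaEquivSigmaPi m) _ _ fun p => ?_).symm
        exact congrArg List.prod (ofFn_sigmaCompositionAux p.1 p.2 φ).symm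

theorem mem_image_blocks {n : ℕ} {l : List ℕ} :
    l ∈ univ.image (blocks : Composition n → List ℕ) ↔ (∀ x ∈ l, 0 < x) ∧ l.sum = n := by
  simp only [Finset.mem_image, Finset.mem_univ, true_and]
  exact ⟨fun ⟨J, hJ⟩ => hJ ▸ ⟨fun _ => J.blocks_pos, J.blocks_sum⟩,
    fun ⟨hpos, hsum⟩ => ⟨⟨l, hpos _, hsum⟩, rfl⟩⟩

/-- A composition of compositions of `n`, seen as the list of its nonempty blocks of blocks. -/
def splitBlocks {n : ℕ} (p : Σ I : Composition n, Composition I.length) : List (List ℕ) :=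
  p.1.blocks.splitWrtComposition p.2

theorem splitBlocks_injective {n : ℕ} : Function.Injective (splitBlocks (n := n)) := by
  intro p q h
  rw [sigma_composition_eq_iff]
  constructor
  · rw [← flatten_splitWrtComposition p.1.blocks p.2, ← flatten_splitWrtComposition q.1.blocks q.2]
    exact congrArg flatten h
  · rw [← map_length_splitWrtComposition p.1.blocks p.2,
      ← map_length_splitWrtComposition q.1.blocks q.2]
    exact congrArg (map List.length) h

theorem mem_image_splitBlocks {n : ℕ} {L : List (List ℕ)} :
    L ∈ univ.image (splitBlocks (n := n)) ↔
      (∀ l ∈ L, l ≠ []) ∧ (∀ x ∈ L.flatten, 0 < x) ∧ L.flatten.sum = n := by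
  simp only [Finset.mem_image, Finset.mem_univ, true_and]
  constructor
  · rintro ⟨⟨I, c⟩, rfl⟩
    refine ⟨fun l hl => ?_, ?_⟩
    · have : l.length ∈ c.blocks := by
        rw [← map_length_splitWrtComposition I.blocks c]
        exact mem_map_of_mem hl
      exact ne_nil_of_length_pos (c.blocks_pos this)
    · rw [splitBlocks, flatten_splitWrtComposition]
      exact ⟨fun _ => I.blocks_pos, I.blocks_sum⟩
  · rintro ⟨hne, hpos, hsum⟩
    let I : Composition n := ⟨L.flatten, hpos _, hsum⟩
    let c : Composition I.length :=
      ⟨L.map List.length, by simpa [List.length_pos_iff] using hne,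
        by simp [I, Composition.length, length_flatten]⟩
    exact ⟨⟨I, c⟩, splitWrtComposition_flatten L c rfl⟩

theorem sum_image_splitBlocks_eq_sum_concat {M : Type*} [AddCommMonoid M]
    (Φ : List (List ℕ) → M) {N : ℕ} (hN : N ≠ 0) :
    ∑ L ∈ univ.image (splitBlocks (n := N)), Φ L =
      ∑ n ∈ Icc 1 N, ∑ L ∈ univ.image (splitBlocks (n := N - n)),
        ∑ l ∈ univ.image (blocks : Composition n → List ℕ), Φ (L ++ [l]) := by
  have concat_of_mem {L} (hL : L ∈ univ.image (splitBlocks (n := N))) :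
      ∃ L' l, L = L' ++ [l] := by
    refine (eq_nil_or_concat' L).resolve_left ?_
    rintro rfl
    exact hN (mem_image_splitBlocks.1 hL).2.2.symm
  simp_rw [← Finset.sum_product', Finset.sum_sigma']
  refine Finset.sum_nbij' (fun L => ⟨(L.getLastD []).sum, L.dropLast, L.getLastD []⟩)
    (fun x => x.2.1 ++ [x.2.2]) ?_ ?_ ?_ ?_ ?_
  · intro L hL
    obtain ⟨L', l, rfl⟩ := concat_of_mem hL
    simp only [Finset.mem_sigma, Finset.mem_product, Finset.mem_Icc, mem_image_splitBlocks,
      mem_image_blocks, getLastD_concat, dropLast_concat, flatten_concat, List.mem_append,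
      List.sum_append, List.mem_singleton, or_imp, forall_and, forall_eq] at hL ⊢
    obtain ⟨⟨hne, hl⟩, ⟨hpos, hlpos⟩, hsum⟩ := hL
    have hl_sum := List.sum_pos l hlpos hl
    exact ⟨⟨hl_sum, by omega⟩, ⟨hne, hpos, by omega⟩, hlpos, trivial⟩
  · rintro ⟨n, L, l⟩ h
    simp only [Finset.mem_sigma, Finset.mem_product, Finset.mem_Icc, mem_image_splitBlocks,
      mem_image_blocks, flatten_concat, List.mem_append, List.sum_append, List.mem_singleton,
      or_imp, forall_and, forall_eq] at h ⊢
    obtain ⟨⟨hn, hnN⟩, ⟨hne, hpos, hsum⟩, hlpos, rfl⟩ := h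
    refine ⟨⟨hne, ?_⟩, ⟨hpos, hlpos⟩, by omega⟩
    rintro rfl
    simp at hn
  · intro L hL
    obtain ⟨L', l, rfl⟩ := concat_of_mem hL
    simp
  · rintro ⟨n, L, l⟩ h
    simp only [Finset.mem_sigma, Finset.mem_product, mem_image_blocks] at h
    simp [h.2.2.2]
  · intro L hL
    obtain ⟨L', l, rfl⟩ := concat_of_mem hL
    simp

theorem sum_sigma_eq_sum_Icc_sum_concat {M : Type*} [AddCommMonoid M]
    (Φ : List (List ℕ) → M) {N : ℕ} (hN : N ≠ 0) :
    ∑ p : Σ I : Composition N, Composition I.length, Φ (splitBlocks p) =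
      ∑ n ∈ Icc 1 N, ∑ p : Σ I : Composition (N - n), Composition I.length,
        ∑ J : Composition n, Φ (splitBlocks p ++ [J.blocks]) := by
  rw [← sum_image splitBlocks_injective.injOn, sum_image_splitBlocks_eq_sum_concat Φ hN]
  refine sum_congr rfl fun n _ => ?_
  rw [sum_image splitBlocks_injective.injOn]
  exact sum_congr rfl fun p _ => sum_image fun J _ K _ h => Composition.ext h

end Composition

open Composition

theorem invCoeff_eq_sum_prod_neg {R : Type*} [Ring R] (g : ℕ → R) (m : ℕ) :
    invCoeff g m = ∑ K : Composition m, (K.blocks.map fun k => -g k).prod := by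
  rcases eq_or_ne m 0 with rfl | hm
  · have (K : Composition 0) : K.blocks = [] := K.blocks_eq_nil.2 rfl
    simp [invCoeff, this, composition_card]
  · rw [invCoeff, if_neg hm]
    refine sum_congr rfl fun K _ => ?_
    rw [List.prod_map_neg_apply, blocks_length]

section

variable {R : Type*} [Ring R] [Algebra ℚ R]

theorem solnCoeff_of_ne_zero (θ : ℕ → R) {n : ℕ} (hn : n ≠ 0) :
    solnCoeff θ n = ∑ J : Composition n, cListQ J.blocks • (J.blocks.map θ).prod :=
  if_neg hn

/-- The weight `Ψ(L)` with which a list `L` of compositions enters `h_m`. -/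
def signedWeight (θ : ℕ → R) (L : List (List ℕ)) : R :=
  (L.map fun l => -(cListQ l • (l.map θ).prod)).prod

theorem signedWeight_concat (θ : ℕ → R) (L : List (List ℕ)) (l : List ℕ) :
    signedWeight θ (L ++ [l]) = signedWeight θ L * -(cListQ l • (l.map θ).prod) := by
  simp [signedWeight]

theorem neg_signedWeight_splitBlocks (θ : ℕ → R) {n : ℕ} (I : Composition n)
    (c : Composition I.length) :
    -signedWeight θ (splitBlocks ⟨I, c⟩) =
      ((-1 : ℚ) ^ (c.length + 1) * ((I.blocks.splitWrtComposition c).map cListQ).prod) •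
        (I.blocks.map θ).prod := by
  have hθ : ((I.blocks.splitWrtComposition c).map fun l => (l.map θ).prod).prod =
      (I.blocks.map θ).prod := by
    conv_rhs => rw [← flatten_splitWrtComposition I.blocks c]
    rw [map_flatten, prod_flatten, List.map_map]
    rfl
  simp only [signedWeight, splitBlocks, ← neg_smul, List.prod_map_smul, hθ,
    List.prod_map_neg_apply, length_splitWrtComposition, pow_succ]
  simp

theorem invCoeff_solnCoeff (θ : ℕ → R) (m : ℕ) :
    invCoeff (solnCoeff θ) m =
      ∑ p : Σ I : Composition m, Composition I.length, signedWeight θ (splitBlocks p) := by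
  rw [invCoeff_eq_sum_prod_neg]
  refine .trans ?_ (sum_prod_map_sum_eq_sum_sigma (fun l => -(cListQ l • (l.map θ).prod)) m)
  refine sum_congr rfl fun K _ => congrArg List.prod (map_congr_left fun k hk => ?_)
  rw [solnCoeff_of_ne_zero θ (K.blocks_pos hk).ne', ← sum_neg_distrib]

end

/-- With `g = solnCoeff θ` and `h = invCoeff g`, for every `i ≥ 0` and `j ≥ 1`,
`Σ_{n=j}^{i+j} h_{i+j−n}·g_n = Σ_{I composition of i+j} C(I)·θ_I`, where
`C(I) = Σ_{I = I₁⁀⋯⁀I_m, |I_m| ≥ j} (−1)^{m+1} c(I₁)⋯c(I_m)`, the sum being over all ways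
of writing `I` as a concatenation of nonempty compositions with the last block summing to
at least `j` (parameterized by compositions `c` of the length of `I`, via splitting the
block list of `I` along `c`). -/
theorem stmt16 {R : Type*} [Ring R] [Algebra ℚ R] (θ : ℕ → R) (i j : ℕ) (hj : 1 ≤ j) :
    ∑ n ∈ Finset.Icc j (i + j), invCoeff (solnCoeff θ) (i + j - n) * solnCoeff θ n =
      ∑ I : Composition (i + j),
        (∑ c : Composition I.length,
            if j ≤ ((I.blocks.splitWrtComposition c).getLastD []).sum then
              (-1 : ℚ) ^ (c.length + 1) * ((I.blocks.splitWrtComposition c).map cListQ).prod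
            else 0)
          • (I.blocks.map θ).prod := by
  set N := i + j
  let Φ (L : List (List ℕ)) : R := if j ≤ (L.getLastD []).sum then -signedWeight θ L else 0
  calc ∑ n ∈ Icc j N, invCoeff (solnCoeff θ) (N - n) * solnCoeff θ n
      = ∑ n ∈ Icc 1 N, ∑ p : Σ I : Composition (N - n), Composition I.length,
          ∑ J : Composition n, Φ (splitBlocks p ++ [J.blocks]) := by
        rw [show Icc j N = (Icc 1 N).filter (j ≤ ·) by ext; simp; omega, sum_filter]
        refine sum_congr rfl fun n hn => ?_
        split_ifs with hjn
        · rw [invCoeff_solnCoeff, solnCoeff_of_ne_zero θ (by simp at hn; omega), sum_mul_sum]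
          simp [Φ, hjn, signedWeight_concat]
        · simp [Φ, hjn]
    _ = ∑ p : Σ I : Composition N, Composition I.length, Φ (splitBlocks p) :=
        (sum_sigma_eq_sum_Icc_sum_concat Φ (by omega)).symm
    _ = _ := by
        rw [Fintype.sum_sigma]
        refine sum_congr rfl fun I _ => ?_
        rw [Finset.sum_smul]
        refine sum_congr rfl fun c _ => ?_
        rw [ite_smul, zero_smul, ← neg_signedWeight_splitBlocks]
        rfl
end
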